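/- arXiv:2308.02306 — 12 statements merged into one kernel-verified Lean document; each statement's English description precedes it below -/
import Mathlib

section
/- Let N be a finite set of candidates partitioned into contests, where each contest c has candidate set N_c and a vote cap v_c ≥ 1. A ballot is a subset β ⊆ N; it is feasible if |β ∩ N_c| ≤ v_c for all contests c. For a bijection σ : N → N and a deck of feasible ballots β_1,…,β_B, define for candidate i in contest c: T^σ_i = |{b : σ(i) ∈ β_b and |{j ∈ N_c : σ(j) ∈ β_b}| ≤ v_c}|, and T*_i = |{b : i ∈ β_b}| (since ballots are feasible). Then for any non-identity bijection σ, the vectors T^σ and T* differ if and only if at least one of the following holds: (1) there is a candidate i with |{b : i ∈ β_b}| ≠ |{b : σ(i) ∈ β_b}|; or (2) there exist a contest c and a ballot β_b with |{j ∈ N_c : σ(j) ∈ β_b}| > v_c. -/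
open Finset

variable {ι γ : Type*} [Fintype ι] [DecidableEq ι] [DecidableEq γ]

/-- A ballot `β` is feasible if, in every contest `c`, it selects at most `v c` candidates. -/
def feasibleBallot (con : ι → γ) (v : γ → ℕ) (β : Finset ι) : Prop :=
  ∀ c : γ, (β.filter fun j => con j = c).card ≤ v c

/-- The tally of candidate `i` output by a machine whose candidate-to-target mapping is `σ`,
on the deck `β`. A ballot contributes iff it selects target `σ i` and the contest of `i`
is not interpreted as overvoted under `σ`. -/
def tally (con : ι → γ) (v : γ → ℕ) (σ : ι → ι) {B : ℕ}
    (β : Fin B → Finset ι) (i : ι) : ℕ :=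
  (Finset.univ.filter fun b : Fin B => σ i ∈ β b ∧
    (Finset.univ.filter fun j : ι => con j = con i ∧ σ j ∈ β b).card ≤ v (con i)).card

/-- The number of ballots of the deck selecting the target of candidate `i`. -/
def voteCount {B : ℕ} (β : Fin B → Finset ι) (i : ι) : ℕ :=
  (Finset.univ.filter fun b : Fin B => i ∈ β b).card

lemma tally_id_eq (con : ι → γ) (v : γ → ℕ) {B : ℕ} (β : Fin B → Finset ι)
    (hfeas : ∀ b, feasibleBallot con v (β b)) (i : ι) :
    tally con v id β i = voteCount β i := by
  unfold tally voteCount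
  congr 1
  apply Finset.filter_congr
  intro b _
  simp only [id_eq]
  constructor
  · exact fun h => h.1
  · intro h
    refine ⟨h, ?_⟩
    calc (Finset.univ.filter fun j => con j = con i ∧ j ∈ β b).card
        = ((β b).filter fun j => con j = con i).card := by
          congr 1; ext j; simp [and_comm]
      _ ≤ v (con i) := hfeas b (con i)

lemma tally_le_voteCount (con : ι → γ) (v : γ → ℕ) (σ : ι → ι) {B : ℕ}
    (β : Fin B → Finset ι) (i : ι) :
    tally con v σ β i ≤ voteCount β (σ i) := by
  apply Finset.card_le_card
  intro b hb
  simp only [Finset.mem_filter] at *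
  exact ⟨hb.1, hb.2.1⟩

lemma tally_of_no_overvote (con : ι → γ) (v : γ → ℕ) (σ : ι → ι) {B : ℕ}
    (β : Fin B → Finset ι)
    (h : ∀ (c : γ) (b : Fin B),
      (Finset.univ.filter fun j : ι => con j = c ∧ σ j ∈ β b).card ≤ v c) (i : ι) :
    tally con v σ β i = voteCount β (σ i) := by
  unfold tally voteCount
  congr 1
  apply Finset.filter_congr
  intro b _
  exact ⟨fun hb => hb.1, fun hb => ⟨hb, h (con i) b⟩⟩

theorem deck_detects_iff (con : ι → γ) (v : γ → ℕ) (hv : ∀ c, 1 ≤ v c)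
    {B : ℕ} (β : Fin B → Finset ι)
    (hfeas : ∀ b, feasibleBallot con v (β b))
    (σ : Equiv.Perm ι) (hσ : σ ≠ 1) :
    tally con v (⇑σ) β ≠ tally con v id β ↔
      ((∃ i : ι, voteCount β i ≠ voteCount β (σ i)) ∨
        (∃ (c : γ) (b : Fin B),
          v c < (Finset.univ.filter fun j : ι => con j = c ∧ σ j ∈ β b).card)) := by
  constructor
  · intro hne
    by_contra hcon
    push_neg at hcon
    obtain ⟨h1, h2⟩ := hcon
    apply hne
    funext i
    rw [tally_id_eq con v β hfeas i,
      tally_of_no_overvote con v (⇑σ) β (h2) i,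
      h1 i]
  · rintro h heq
    have htv : ∀ i, tally con v (⇑σ) β i = voteCount β i := by
      intro i
      rw [← tally_id_eq con v β hfeas i]
      exact congrFun heq i
    have hle : ∀ i, voteCount β i ≤ voteCount β (σ i) := fun i =>
      (htv i) ▸ tally_le_voteCount con v (⇑σ) β i
    have hsum : ∑ i, voteCount β i = ∑ i, voteCount β (σ i) :=
      (Equiv.sum_comp σ (voteCount β)).symm
    have hall : ∀ i, voteCount β i = voteCount β (σ i) := by
      intro i
      exact (Finset.sum_eq_sum_iff_of_le (fun j _ => hle j)).mp hsum i (Finset.mem_univ i)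
    rcases h with ⟨i, hi⟩ | ⟨c, b, hcb⟩
    · exact hi (hall i)
    · -- get a candidate i in contest c with σ i ∈ β b
      have hpos : 0 < (Finset.univ.filter fun j : ι => con j = c ∧ σ j ∈ β b).card :=
        lt_of_le_of_lt (Nat.zero_le _) hcb
      obtain ⟨i, hi⟩ := Finset.card_pos.mp hpos
      simp only [Finset.mem_filter] at hi
      obtain ⟨-, hic, hib⟩ := hi
      have hss : (Finset.univ.filter fun b' : Fin B => σ i ∈ β b' ∧
          (Finset.univ.filter fun j : ι => con j = con i ∧ σ j ∈ β b').card ≤ v (con i))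
          ⊂ (Finset.univ.filter fun b' : Fin B => σ i ∈ β b') := by
        constructor
        · intro b' hb'
          simp only [Finset.mem_filter] at *
          exact ⟨hb'.1, hb'.2.1⟩
        · intro hsub
          have hbmem : b ∈ Finset.univ.filter fun b' : Fin B => σ i ∈ β b' := by
            simp [hib]
          have := hsub hbmem
          simp only [Finset.mem_filter] at this
          rw [hic] at this
          exact absurd this.2.2 (not_le.mpr hcb)
      have hlt : tally con v (⇑σ) β i < voteCount β (σ i) :=
        Finset.card_lt_card hss
      rw [htv i, hall i] at hlt
      exact lt_irrefl _ hlt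
end

section
/- With the same setting, if for a non-identity bijection σ the deck of feasible ballots satisfies |{b : i ∈ β_b}| = |{b : σ(i) ∈ β_b}| for every candidate i, and |{j ∈ N_c : σ(j) ∈ β_b}| ≤ v_c for every contest c and every ballot b, then T^σ(β_1,…,β_B) = T*(β_1,…,β_B), i.e., the miscalibrated machine's output exactly matches the correct output for every candidate. -/
open Finset

variable {ι γ : Type*} [Fintype ι] [DecidableEq ι] [DecidableEq γ]

theorem undetected_of_equal_counts_and_no_overvotes
    (con : ι → γ) (v : γ → ℕ) {B : ℕ} (β : Fin B → Finset ι)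
    (hfeas : ∀ b, feasibleBallot con v (β b))
    (σ : Equiv.Perm ι) (hσ : σ ≠ 1)
    (hcount : ∀ i : ι, voteCount β i = voteCount β (σ i))
    (hover : ∀ (c : γ) (b : Fin B),
      (Finset.univ.filter fun j : ι => con j = c ∧ σ j ∈ β b).card ≤ v c) :
    tally con v (⇑σ) β = tally con v id β := by
  funext i
  have key := (hcount i).symm
  unfold tally voteCount at *
  trans (Finset.univ.filter fun b : Fin B => σ i ∈ β b).card
  · congr 1
    ext b
    simp only [mem_filter, mem_univ, true_and, and_iff_left_iff_imp]
    intro _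
    exact hover (con i) b
  · rw [key]
    congr 1
    ext b
    simp only [mem_filter, mem_univ, true_and, id_eq]
    refine ⟨fun h => ⟨h, ?_⟩, And.left⟩
    refine le_trans (le_of_eq ?_) (hfeas b (con i))
    congr 1
    ext j
    simp [and_comm]
end

section
/- Conversely, in the same setting, if T^σ(β_1,…,β_B) = T*(β_1,…,β_B) for a bijection σ and a deck of feasible ballots, then (a) for every contest c and ballot b, |{j ∈ N_c : σ(j) ∈ β_b}| ≤ v_c (no contest is interpreted as overvoted under σ), and (b) for every candidate i, |{b : i ∈ β_b}| = |{b : σ(i) ∈ β_b}|. -/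
open Finset

variable {ι γ : Type*} [Fintype ι] [DecidableEq ι] [DecidableEq γ]

theorem no_overvotes_and_equal_counts_of_undetected
    (con : ι → γ) (v : γ → ℕ) {B : ℕ} (β : Fin B → Finset ι)
    (hfeas : ∀ b, feasibleBallot con v (β b))
    (σ : Equiv.Perm ι)
    (heq : tally con v (⇑σ) β = tally con v id β) :
    (∀ (c : γ) (b : Fin B),
      (Finset.univ.filter fun j : ι => con j = c ∧ σ j ∈ β b).card ≤ v c) ∧
    (∀ i : ι, voteCount β i = voteCount β (σ i)) := by
  -- Under the identity, feasibility means no overvotes, so tally = voteCount.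
  have htid : ∀ i : ι, tally con v id β i = voteCount β i := by
    intro i
    unfold tally voteCount
    congr 1
    apply Finset.filter_congr
    intro b _
    simp only [id_eq, and_iff_left_iff_imp]
    intro _
    have h1 : (Finset.univ.filter fun j : ι => con j = con i ∧ j ∈ β b)
        = (β b).filter fun j => con j = con i := by
      ext j; simp [and_comm]
    rw [h1]
    exact hfeas b (con i)
  have hle : ∀ i : ι, tally con v (⇑σ) β i ≤ voteCount β (σ i) := by
    intro i
    apply Finset.card_le_card
    intro b hb
    simp only [Finset.mem_filter] at hb ⊢
    exact ⟨hb.1, hb.2.1⟩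
  have hsum1 : ∑ i : ι, tally con v (⇑σ) β i = ∑ i : ι, voteCount β i := by
    rw [heq]; exact Finset.sum_congr rfl fun i _ => htid i
  have hsum2 : ∑ i : ι, voteCount β (σ i) = ∑ i : ι, voteCount β i :=
    Equiv.sum_comp σ (voteCount β)
  have hall : ∀ i : ι, tally con v (⇑σ) β i = voteCount β (σ i) := by
    have := (Finset.sum_eq_sum_iff_of_le (fun i _ => hle i)).mp
      (by rw [hsum1, hsum2])
    intro i; exact this i (Finset.mem_univ i)
  -- From card equality and subset, each b with σ i ∈ β b satisfies the no-overvote condition.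
  have hkey : ∀ (i : ι) (b : Fin B), σ i ∈ β b →
      (Finset.univ.filter fun j : ι => con j = con i ∧ σ j ∈ β b).card ≤ v (con i) := by
    intro i b hb
    have hsub : (Finset.univ.filter fun b : Fin B => σ i ∈ β b ∧
        (Finset.univ.filter fun j : ι => con j = con i ∧ σ j ∈ β b).card ≤ v (con i))
        ⊆ Finset.univ.filter fun b : Fin B => σ i ∈ β b := by
      intro x hx
      simp only [Finset.mem_filter] at hx ⊢
      exact ⟨hx.1, hx.2.1⟩
    have hcard : (Finset.univ.filter fun b : Fin B => σ i ∈ β b).card ≤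
        (Finset.univ.filter fun b : Fin B => σ i ∈ β b ∧
        (Finset.univ.filter fun j : ι => con j = con i ∧ σ j ∈ β b).card ≤ v (con i)).card :=
      le_of_eq (hall i).symm
    have hEq := Finset.eq_of_subset_of_card_le hsub hcard
    have hbmem : b ∈ Finset.univ.filter fun b : Fin B => σ i ∈ β b := by
      simp [hb]
    rw [← hEq] at hbmem
    simp only [Finset.mem_filter] at hbmem
    exact hbmem.2.2
  constructor
  · intro c b
    by_contra hcon
    push_neg at hcon
    have hne : (Finset.univ.filter fun j : ι => con j = c ∧ σ j ∈ β b).Nonempty := by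
      rw [← Finset.card_pos]; omega
    obtain ⟨j, hj⟩ := hne
    simp only [Finset.mem_filter] at hj
    have := hkey j b hj.2.2
    rw [hj.2.1] at this
    omega
  · intro i
    rw [← htid i, ← heq, hall i]
end

section
/- If a deck of feasible ballots (β_1,…,β_B) detects every non-identity bijection σ, then for any two distinct candidates i ≠ j belonging to the same contest, the number of ballots containing i differs from the number of ballots containing j: |{b : i ∈ β_b}| ≠ |{b : j ∈ β_b}|. -/
open Finset

variable {ι γ : Type*} [Fintype ι] [DecidableEq ι] [DecidableEq γ]

theorem distinct_counts_within_contest_of_detects_all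
    (con : ι → γ) (v : γ → ℕ) {B : ℕ} (β : Fin B → Finset ι)
    (hfeas : ∀ b, feasibleBallot con v (β b))
    (hdet : ∀ σ : Equiv.Perm ι, σ ≠ 1 → tally con v (⇑σ) β ≠ tally con v id β) :
    ∀ i j : ι, i ≠ j → con i = con j → voteCount β i ≠ voteCount β j := by
  intro i j hij hc hcount
  set σ := Equiv.swap i j with hσdef
  have hconσ : ∀ k, con (σ k) = con k := by
    intro k
    rcases eq_or_ne k i with rfl | hki
    · simp [hσdef, Equiv.swap_apply_left, hc]
    rcases eq_or_ne k j with rfl | hkj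
    · simp [hσdef, Equiv.swap_apply_right, hc]
    · simp [hσdef, Equiv.swap_apply_of_ne_of_ne hki hkj]
  have hover : ∀ (τ : ι → ι), (∀ k, con (τ k) = con k) → Function.Bijective τ →
      ∀ (k : ι) (b : Fin B),
      (univ.filter fun j : ι => con j = con k ∧ τ j ∈ β b).card ≤ v (con k) := by
    intro τ hτ hbij k b
    have hcard : (univ.filter fun j : ι => con j = con k ∧ τ j ∈ β b).card
        = ((β b).filter fun j => con j = con k).card := by
      apply Finset.card_bij (fun a _ => τ a)
      · intro a ha
        simp only [mem_filter, mem_univ, true_and] at ha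
        simp [mem_filter, ha.2, hτ a, ha.1]
      · intro a _ a' _ h; exact hbij.1 h
      · intro b' hb'
        simp only [mem_filter] at hb'
        obtain ⟨a, rfl⟩ := hbij.2 b'
        exact ⟨a, by simp only [mem_filter, mem_univ, true_and]; exact ⟨(hτ a) ▸ hb'.2, hb'.1⟩, rfl⟩
    rw [hcard]; exact hfeas b (con k)
  have htally : ∀ (τ : ι → ι), (∀ k, con (τ k) = con k) → Function.Bijective τ →
      ∀ k, tally con v τ β k = voteCount β (τ k) := by
    intro τ hτ hbij k
    unfold tally voteCount
    congr 1
    apply Finset.filter_congr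
    intro b _
    simp [and_iff_left (hover τ hτ hbij k b)]
  have hid : ∀ k, tally con v id β k = voteCount β k :=
    htally id (fun _ => rfl) Function.bijective_id
  have hσ : tally con v (⇑σ) β = tally con v id β := by
    funext k
    rw [htally σ hconσ σ.bijective k, hid k]
    rcases eq_or_ne k i with rfl | hki
    · rw [hσdef]; simpa [Equiv.swap_apply_left] using hcount.symm
    rcases eq_or_ne k j with rfl | hkj
    · rw [hσdef]; simpa [Equiv.swap_apply_right] using hcount
    · rw [hσdef, Equiv.swap_apply_of_ne_of_ne hki hkj]
  have hne : σ ≠ 1 := by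
    intro h
    apply hij
    have := congrArg (fun e : Equiv.Perm ι => e i) h
    exact (by simpa [hσdef, Equiv.swap_apply_left] using this : j = i).symm
  exact hdet σ hne hσ
end

section
/- Let σ be a bijection on the candidate set N that swaps two candidates i and j of the same contest c and fixes all other candidates (a transposition within a contest). If a deck of feasible ballots gives i and j the same number of votes, i.e., |{b : i ∈ β_b}| = |{b : j ∈ β_b}|, then T^σ(β_1,…,β_B) = T*(β_1,…,β_B); that is, the deck fails to detect σ. -/
open Finset

variable {ι γ : Type*} [Fintype ι] [DecidableEq ι] [DecidableEq γ]

theorem swap_within_contest_undetected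
    (con : ι → γ) (v : γ → ℕ) {B : ℕ} (β : Fin B → Finset ι)
    (hfeas : ∀ b, feasibleBallot con v (β b))
    (i j : ι) (hij : i ≠ j) (hcon : con i = con j)
    (hcount : voteCount β i = voteCount β j) :
    tally con v (⇑(Equiv.swap i j)) β = tally con v id β := by
  have hcon' : ∀ x, con (Equiv.swap i j x) = con x := by
    intro x
    rcases eq_or_ne x i with rfl | hxi
    · simp [Equiv.swap_apply_left, hcon.symm]
    rcases eq_or_ne x j with rfl | hxj
    · simp [Equiv.swap_apply_right, hcon]
    · simp [Equiv.swap_apply_of_ne_of_ne hxi hxj]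
  have hfeas' : ∀ b (c' : γ),
      (univ.filter fun j' : ι => con j' = c' ∧ j' ∈ β b).card ≤ v c' := by
    intro b c'
    have h : (univ.filter fun j' : ι => con j' = c' ∧ j' ∈ β b)
        = (β b).filter fun j' => con j' = c' := by
      ext x; simp [and_comm]
    rw [h]; exact hfeas b c'
  have key : ∀ (b : Fin B) (c' : γ),
      (univ.filter fun j' : ι => con j' = c' ∧ Equiv.swap i j j' ∈ β b).card
        = (univ.filter fun j' : ι => con j' = c' ∧ j' ∈ β b).card := by
    intro b c'
    apply Finset.card_bij (fun x _ => Equiv.swap i j x)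
    · intro a ha
      simp only [mem_filter, mem_univ, true_and] at ha ⊢
      exact ⟨(hcon' a).trans ha.1, ha.2⟩
    · intro a _ a' _ h
      exact (Equiv.swap i j).injective h
    · intro a ha
      simp only [mem_filter, mem_univ, true_and] at ha
      refine ⟨Equiv.swap i j a, ?_, ?_⟩
      · simp only [mem_filter, mem_univ, true_and, Equiv.swap_apply_self]
        exact ⟨(hcon' a).trans ha.1, ha.2⟩
      · simp [Equiv.swap_apply_self]
  have t1 : ∀ k, tally con v (⇑(Equiv.swap i j)) β k = voteCount β (Equiv.swap i j k) := by
    intro k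
    unfold tally voteCount
    congr 1
    ext b
    simp only [mem_filter, mem_univ, true_and, and_iff_left_iff_imp]
    intro _
    rw [key b (con k)]
    exact hfeas' b (con k)
  have t2 : ∀ k, tally con v id β k = voteCount β k := by
    intro k
    unfold tally voteCount
    congr 1
    ext b
    simp only [mem_filter, mem_univ, true_and, id, and_iff_left_iff_imp]
    intro _
    exact hfeas' b (con k)
  funext k
  rw [t1, t2]
  rcases eq_or_ne k i with rfl | hki
  · rw [Equiv.swap_apply_left]; exact hcount.symm
  rcases eq_or_ne k j with rfl | hkj
  · rw [Equiv.swap_apply_right]; exact hcount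
  · rw [Equiv.swap_apply_of_ne_of_ne hki hkj]
end

section
/- Call two contests c, c' equivalent if |N_c| = |N_{c'}| and v_c = v_{c'}. Suppose contests c and c' are equivalent, with candidate enumerations N_c = {a_1,…,a_m} and N_{c'} = {a'_1,…,a'_m}, and suppose a deck of feasible ballots gives a_k and a'_k the same number of votes for every k = 1,…,m. Let σ be the bijection that swaps a_k with a'_k for each k and fixes all other candidates. Then T^σ(β_1,…,β_B) = T*(β_1,…,β_B), i.e., the deck fails to detect σ. Consequently, any deck that detects all non-identity bijections must give lexicographically distinct vote-count vectors to any two equivalent contests. -/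
open Finset

variable {ι γ : Type*} [Fintype ι] [DecidableEq ι] [DecidableEq γ]

theorem cross_contest_swap_undetected
    (con : ι → γ) (v : γ → ℕ) {B : ℕ} (β : Fin B → Finset ι)
    (hfeas : ∀ b, feasibleBallot con v (β b))
    (c c' : γ) (hcc' : c ≠ c') (hv : v c = v c')
    {m : ℕ} (a a' : Fin m → ι)
    (ha : Function.Injective a) (ha' : Function.Injective a')
    (hac : ∀ k, con (a k) = c) (hac' : ∀ k, con (a' k) = c')
    (hsurj : ∀ i : ι, con i = c → ∃ k, a k = i)
    (hsurj' : ∀ i : ι, con i = c' → ∃ k, a' k = i)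
    (hcount : ∀ k, voteCount β (a k) = voteCount β (a' k))
    (σ : Equiv.Perm ι)
    (hσa : ∀ k, σ (a k) = a' k) (hσa' : ∀ k, σ (a' k) = a k)
    (hσfix : ∀ i : ι, con i ≠ c → con i ≠ c' → σ i = i) :
    tally con v (⇑σ) β = tally con v id β ∧ (0 < m → σ ≠ 1) := by
  -- The overvote condition under σ is always satisfied, by feasibility
  have key : ∀ (i : ι) (b : Fin B),
      (Finset.univ.filter fun j : ι => con j = con i ∧ σ j ∈ β b).card ≤ v (con i) := by
    intro i b
    by_cases h1 : con i = c
    · have hcard : (Finset.univ.filter fun j : ι => con j = con i ∧ σ j ∈ β b).card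
          = ((β b).filter fun j => con j = c').card := by
        apply Finset.card_bij (fun j _ => σ j)
        · intro j hj
          simp only [Finset.mem_filter, Finset.mem_univ, true_and, h1] at hj
          obtain ⟨k, rfl⟩ := hsurj j hj.1
          rw [hσa k] at hj ⊢
          exact Finset.mem_filter.2 ⟨hj.2, hac' k⟩
        · intro j1 _ j2 _ h
          exact σ.injective h
        · intro j' hj'
          simp only [Finset.mem_filter] at hj'
          obtain ⟨k, rfl⟩ := hsurj' j' hj'.2
          refine ⟨a k, ?_, hσa k⟩
          simp only [Finset.mem_filter, Finset.mem_univ, true_and, h1, hσa k]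
          exact ⟨hac k, hj'.1⟩
      rw [hcard, h1, hv]
      exact hfeas b c'
    by_cases h2 : con i = c'
    · have hcard : (Finset.univ.filter fun j : ι => con j = con i ∧ σ j ∈ β b).card
          = ((β b).filter fun j => con j = c).card := by
        apply Finset.card_bij (fun j _ => σ j)
        · intro j hj
          simp only [Finset.mem_filter, Finset.mem_univ, true_and, h2] at hj
          obtain ⟨k, rfl⟩ := hsurj' j hj.1
          rw [hσa' k] at hj ⊢
          exact Finset.mem_filter.2 ⟨hj.2, hac k⟩
        · intro j1 _ j2 _ h
          exact σ.injective h
        · intro j' hj'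
          simp only [Finset.mem_filter] at hj'
          obtain ⟨k, rfl⟩ := hsurj j' hj'.2
          refine ⟨a' k, ?_, hσa' k⟩
          simp only [Finset.mem_filter, Finset.mem_univ, true_and, h2, hσa' k]
          exact ⟨hac' k, hj'.1⟩
      rw [hcard, h2, ← hv]
      exact hfeas b c
    · have hcard : (Finset.univ.filter fun j : ι => con j = con i ∧ σ j ∈ β b).card
          = ((β b).filter fun j => con j = con i).card := by
        apply Finset.card_bij (fun j _ => j)
        · intro j hj
          simp only [Finset.mem_filter, Finset.mem_univ, true_and] at hj
          have hfx : σ j = j := hσfix j (hj.1 ▸ h1) (hj.1 ▸ h2)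
          rw [hfx] at hj
          exact Finset.mem_filter.2 ⟨hj.2, hj.1⟩
        · intro j1 _ j2 _ h
          exact h
        · intro j' hj'
          simp only [Finset.mem_filter] at hj'
          refine ⟨j', ?_, rfl⟩
          have hfx : σ j' = j' := hσfix j' (hj'.2 ▸ h1) (hj'.2 ▸ h2)
          simp only [Finset.mem_filter, Finset.mem_univ, true_and, hfx]
          exact ⟨hj'.2, hj'.1⟩
      rw [hcard]
      exact hfeas b (con i)
  -- the overvote condition under id is always satisfied
  have keyid : ∀ (i : ι) (b : Fin B),
      (Finset.univ.filter fun j : ι => con j = con i ∧ id j ∈ β b).card ≤ v (con i) := by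
    intro i b
    have hcard : (Finset.univ.filter fun j : ι => con j = con i ∧ id j ∈ β b).card
        = ((β b).filter fun j => con j = con i).card := by
      congr 1
      ext j
      simp [and_comm]
    rw [hcard]
    exact hfeas b (con i)
  have htallyσ : ∀ i, tally con v (⇑σ) β i = voteCount β (σ i) := by
    intro i
    unfold tally voteCount
    congr 1
    apply Finset.filter_congr
    intro b _
    simp only [and_iff_left_iff_imp]
    exact fun _ => key i b
  have htallyid : ∀ i, tally con v id β i = voteCount β i := by
    intro i
    unfold tally voteCount
    congr 1
    apply Finset.filter_congr
    intro b _
    simp only [id, and_iff_left_iff_imp]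
    exact fun _ => keyid i b
  constructor
  · funext i
    rw [htallyσ, htallyid]
    by_cases h1 : con i = c
    · obtain ⟨k, rfl⟩ := hsurj i h1
      rw [hσa k, ← hcount k]
    by_cases h2 : con i = c'
    · obtain ⟨k, rfl⟩ := hsurj' i h2
      rw [hσa' k, hcount k]
    · rw [hσfix i h1 h2]
  · intro hm h
    have h0 := hσa ⟨0, hm⟩
    rw [h, Equiv.Perm.one_apply] at h0
    exact hcc' (by rw [← hac ⟨0, hm⟩, h0, hac' ⟨0, hm⟩])
end

section
/- Let σ be a non-identity bijection on candidates with the property that for every contest c, every candidate i ∈ N_c, and every n ≥ 1: σ^n(i) ∈ N_c implies σ^n(i) = i (each cycle of σ contains at most one candidate per contest). Then there exists a deck of feasible ballots such that: (a) every candidate receives at least one vote, (b) within each contest, all candidates receive pairwise distinct numbers of votes, and (c) T^σ equals T*, i.e., the deck fails to detect σ. Concretely, if σ has cycles with element-sets O_1,…,O_K, the deck containing k copies of the ballot O_k for each k = 1,…,K works. -/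
/-!
Let `O_1, …, O_K` be the cycles of `σ` and take the deck with `k` copies of the ballot `O_k`.
By the hypothesis on `σ`, each cycle meets every contest at most once, so every ballot is
feasible and no machine ever reads one as overvoted. Since `σ` maps each cycle onto itself,
both `T*` and `T^σ` give every candidate of `O_k` exactly `k` votes; candidates of one contest
lie in distinct cycles and hence receive distinct totals.
-/

open Finset

variable {ι γ : Type*} [Fintype ι] [DecidableEq ι] [DecidableEq γ]

omit [Fintype ι] [DecidableEq ι] in
theorem feasibleBallot_of_injOn {con : ι → γ} {v : γ → ℕ} (hv : ∀ c, 1 ≤ v c) {β : Finset ι}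
    (hβ : Set.InjOn con β) : feasibleBallot con v β := fun c =>
  (card_le_one.2 fun _ hx _ hy => hβ (mem_filter.1 hx).1 (mem_filter.1 hy).1
    ((mem_filter.1 hx).2.trans (mem_filter.1 hy).2.symm)).trans (hv c)

-- A feasible ballot closed under `τ` is never read as overvoted by the machine with mapping `τ`.
theorem tally_eq_voteCount {con : ι → γ} {v : γ → ℕ} {B : ℕ} {β : Fin B → Finset ι}
    (hβ : ∀ b, feasibleBallot con v (β b)) {τ : ι → ι} (hτ : ∀ b j, τ j ∈ β b ↔ j ∈ β b) :
    tally con v τ β = voteCount β := by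
  funext i
  unfold tally voteCount
  congr 1
  ext b
  simp only [mem_filter, mem_univ, true_and, hτ]
  refine and_iff_left ?_
  convert hβ b (con i) using 2
  ext j
  simp [and_comm]

theorem exists_deck_voteCount_eq {α : Type*} [Fintype α] [DecidableEq α] (p : ι → α)
    (m : α → ℕ) : ∃ (B : ℕ) (β : Fin B → Finset ι),
      (∀ b, ∃ a, ∀ j, j ∈ β b ↔ p j = a) ∧ ∀ i, voteCount β i = m (p i) := by
  let e := Fintype.equivFin (Σ a, Fin (m a))
  refine ⟨_, fun b => univ.filter (p · = (e.symm b).1), fun b => ⟨(e.symm b).1, by simp⟩,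
    fun i => ?_⟩
  calc voteCount _ i = (univ.filter fun x : Σ a, Fin (m a) => x.1 = p i).card := by
        refine card_equiv e.symm fun b => ?_
        simp [eq_comm]
    _ = (({p i} : Finset α).sigma fun _ => univ).card := by
        congr 1
        ext x
        simp
    _ = m (p i) := by simp

omit [DecidableEq ι] [DecidableEq γ] in
theorem Equiv.Perm.SameCycle.eq_of_con_eq {con : ι → γ} {σ : Equiv.Perm ι}
    (hcyc : ∀ (i : ι) (n : ℕ), 1 ≤ n → con ((σ ^ n) i) = con i → (σ ^ n) i = i) {i j : ι}
    (hij : σ.SameCycle i j) (hc : con i = con j) : i = j := by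
  obtain ⟨n, -, rfl⟩ := hij.exists_pow_eq'
  rcases Nat.eq_zero_or_pos n with rfl | hn
  · rfl
  · exact (hcyc i n hn hc.symm).symm

theorem exists_legal_deck_missing_cross_contest_perm_general
    (con : ι → γ) (v : γ → ℕ) (hv : ∀ c, 1 ≤ v c)
    (σ : Equiv.Perm ι)
    (hcyc : ∀ (i : ι) (n : ℕ), 1 ≤ n → con ((σ ^ n) i) = con i → (σ ^ n) i = i) :
    ∃ (B : ℕ) (β : Fin B → Finset ι),
      (∀ b, feasibleBallot con v (β b)) ∧
      (∀ i : ι, 1 ≤ tally con v id β i) ∧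
      (∀ i j : ι, i ≠ j → con i = con j →
        tally con v id β i ≠ tally con v id β j) ∧
      tally con v (⇑σ) β = tally con v id β := by
  classical
  -- `k + 1` copies of the `k`-th cycle of `σ`, for some enumeration of the cycles
  let cycle : ι → Quotient (Equiv.Perm.SameCycle.setoid σ) := Quotient.mk _
  let rank := Fintype.equivFin (Quotient (Equiv.Perm.SameCycle.setoid σ))
  obtain ⟨B, β, hβ, hcount⟩ := exists_deck_voteCount_eq cycle fun q => (rank q : ℕ) + 1
  have hinj : ∀ b, Set.InjOn con (β b) := by
    intro b x hx y hy hxy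
    obtain ⟨q, hq⟩ := hβ b
    rw [mem_coe, hq] at hx hy
    exact Equiv.Perm.SameCycle.eq_of_con_eq hcyc (Quotient.exact (hx.trans hy.symm)) hxy
  have hfeas : ∀ b, feasibleBallot con v (β b) := fun b => feasibleBallot_of_injOn hv (hinj b)
  have hclosed : ∀ b j, σ j ∈ β b ↔ j ∈ β b := by
    intro b j
    obtain ⟨q, hq⟩ := hβ b
    have : cycle (σ j) = cycle j :=
      Quotient.sound (Equiv.Perm.sameCycle_apply_left.2 (Equiv.Perm.SameCycle.refl σ j))
    rw [hq, hq, this]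
  refine ⟨B, β, hfeas, ?_⟩
  rw [tally_eq_voteCount hfeas hclosed, tally_eq_voteCount (τ := id) hfeas fun _ _ => Iff.rfl]
  refine ⟨fun i => by simp [hcount], fun i j hij hc h => hij ?_, rfl⟩
  rw [hcount, hcount, add_left_inj, Fin.val_inj, rank.apply_eq_iff_eq] at h
  exact Equiv.Perm.SameCycle.eq_of_con_eq hcyc (Quotient.exact h) hc

theorem exists_legal_deck_missing_cross_contest_perm
    (con : ι → γ) (v : γ → ℕ) (hv : ∀ c, 1 ≤ v c)
    (σ : Equiv.Perm ι) (hσ : σ ≠ 1)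
    (hcyc : ∀ (i : ι) (n : ℕ), 1 ≤ n → con ((σ ^ n) i) = con i → (σ ^ n) i = i) :
    ∃ (B : ℕ) (β : Fin B → Finset ι),
      (∀ b, feasibleBallot con v (β b)) ∧
      (∀ i : ι, 1 ≤ tally con v id β i) ∧
      (∀ i j : ι, i ≠ j → con i = con j →
        tally con v id β i ≠ tally con v id β j) ∧
      tally con v (⇑σ) β = tally con v id β :=
  exists_legal_deck_missing_cross_contest_perm_general con v hv σ hcyc
end

section
/- Let β̃ ⊆ N be a ballot with |β̃ ∩ N_c| = v_c + 1 for every contest c with |N_c| > v_c, and |β̃ ∩ N_c| = 0 for every contest c with |N_c| ≤ v_c. If a deck of feasible ballots (β_1,…,β_B) detects every non-identity bijection, then for every non-identity bijection σ, at least one of the following holds: (1) some contest c and ballot β_b (b ≤ B) satisfy |{j ∈ N_c : σ(j) ∈ β_b}| > v_c (an unexpected overvote occurs among the feasible ballots); or (2) T^σ(β_1,…,β_B,β̃) ≠ T*(β_1,…,β_B,β̃). -/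
open Finset

variable {ι γ : Type*} [Fintype ι] [DecidableEq ι] [DecidableEq γ]

lemma card_aux (con : ι → γ) (c : γ) (s : Finset ι) :
    (Finset.univ.filter fun j : ι => con j = c ∧ j ∈ s).card =
      (s.filter fun j => con j = c).card := by
  congr 1
  ext j
  simp [and_comm]

lemma tally_snoc (con : ι → γ) (v : γ → ℕ) (σ : ι → ι) {B : ℕ}
    (β : Fin B → Finset ι) (βt : Finset ι) (i : ι) :
    tally con v σ (Fin.snoc β βt) i = tally con v σ β i +
      (if (σ i ∈ βt ∧ (Finset.univ.filter fun j : ι =>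
          con j = con i ∧ σ j ∈ βt).card ≤ v (con i)) then 1 else 0) := by
  unfold tally
  rw [Finset.card_filter, Finset.card_filter, Fin.sum_univ_castSucc]
  simp [Fin.snoc_castSucc, Fin.snoc_last]

theorem augment_with_overvote_ballot
    (con : ι → γ) (v : γ → ℕ) {B : ℕ} (β : Fin B → Finset ι)
    (hfeas : ∀ b, feasibleBallot con v (β b))
    (βt : Finset ι)
    (hβt : ∀ c : γ, (βt.filter fun j => con j = c).card =
      if v c < (Finset.univ.filter fun j : ι => con j = c).card then v c + 1 else 0)
    (hdet : ∀ σ : Equiv.Perm ι, σ ≠ 1 → tally con v (⇑σ) β ≠ tally con v id β) :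
    ∀ σ : Equiv.Perm ι, σ ≠ 1 →
      (∃ (c : γ) (b : Fin B),
        v c < (Finset.univ.filter fun j : ι => con j = c ∧ σ j ∈ β b).card) ∨
      tally con v (⇑σ) (Fin.snoc β βt) ≠ tally con v id (Fin.snoc β βt) := by
  intro σ hσ
  by_contra hcon
  push_neg at hcon
  obtain ⟨hno, heq⟩ := hcon
  have hσβ : ∀ i, tally con v (⇑σ) β i = voteCount β (σ i) := by
    intro i
    unfold tally voteCount
    congr 1
    ext b
    simp only [Finset.mem_filter, Finset.mem_univ, true_and]
    exact and_iff_left (hno (con i) b)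
  have hidβ : ∀ i, tally con v id β i = voteCount β i := by
    intro i
    unfold tally voteCount
    congr 1
    ext b
    simp only [Finset.mem_filter, Finset.mem_univ, true_and, id_eq]
    refine and_iff_left ?_
    rw [card_aux]
    exact hfeas b (con i)
  have hsum : ∑ i, tally con v (⇑σ) β i = ∑ i, tally con v id β i := by
    simp only [hσβ, hidβ]
    exact Equiv.sum_comp σ (voteCount β)
  have hex : ∃ i, tally con v id β i < tally con v (⇑σ) β i := by
    by_contra hc
    push_neg at hc
    have hlt : ∃ i, tally con v (⇑σ) β i ≠ tally con v id β i := by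
      by_contra hc2
      push_neg at hc2
      exact hdet σ hσ (funext hc2)
    obtain ⟨i, hi⟩ := hlt
    have : ∑ i, tally con v (⇑σ) β i < ∑ i, tally con v id β i :=
      Finset.sum_lt_sum (fun j _ => hc j)
        ⟨i, Finset.mem_univ i, lt_of_le_of_ne (hc i) hi⟩
    exact this.ne hsum
  obtain ⟨i, hi⟩ := hex
  have hidQ : ¬ ((id i ∈ βt) ∧ (Finset.univ.filter fun j : ι =>
      con j = con i ∧ id j ∈ βt).card ≤ v (con i)) := by
    rintro ⟨h1, h2⟩
    simp only [id_eq] at h1 h2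
    rw [card_aux] at h2
    have hmem : i ∈ βt.filter fun j => con j = con i :=
      Finset.mem_filter.mpr ⟨h1, rfl⟩
    have hpos : 0 < (βt.filter fun j => con j = con i).card :=
      Finset.card_pos.mpr ⟨i, hmem⟩
    have := hβt (con i)
    by_cases hv : v (con i) < (Finset.univ.filter fun j : ι => con j = con i).card
    · rw [if_pos hv] at this
      omega
    · rw [if_neg hv] at this
      omega
  have h1 := tally_snoc con v (⇑σ) β βt i
  have h2 := tally_snoc con v id β βt i
  rw [if_neg hidQ, add_zero] at h2
  have h3 := congrFun heq i
  have h4 : tally con v (⇑σ) β i ≤ tally con v (⇑σ) (Fin.snoc β βt) i := by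
    rw [h1]; exact Nat.le_add_right _ _
  omega
end

section
/- With the graph and component notation as before, let σ be a non-identity bijection satisfying T^σ(β_1,…,β_B) = T*(β_1,…,β_B) for a deck of feasible ballots (σ is undetected). Then for every connected component K of G^σ, the restricted bijection σ_K is also undetected: T^{σ_K}(β_1,…,β_B) = T*(β_1,…,β_B). -/
open Finset

variable {ι γ : Type*} [Fintype ι] [DecidableEq ι] [DecidableEq γ]

open scoped Classical in
theorem component_restriction_undetected
    (con : ι → γ) (v : γ → ℕ) {B : ℕ} (β : Fin B → Finset ι)
    (hfeas : ∀ b, feasibleBallot con v (β b))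
    (σ : Equiv.Perm ι) (hσ : σ ≠ 1)
    (G : SimpleGraph γ)
    (hG : ∀ c c' : γ, G.Adj c c' ↔ c ≠ c' ∧
      ∃ i i' : ι, con i = c ∧ con i' = c' ∧ (σ i = i' ∨ σ i' = i))
    (c₀ : γ) (i₀ : ι) (hi₀ : con i₀ = c₀) (hmove : σ i₀ ≠ i₀)
    (hundet : tally con v (⇑σ) β = tally con v id β) :
    tally con v (fun i : ι => if G.Reachable c₀ (con i) then σ i else i) β =
      tally con v id β := by
  funext i
  by_cases h : G.Reachable c₀ (con i)
  · have key : tally con v (fun j : ι => if G.Reachable c₀ (con j) then σ j else j) β i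
        = tally con v (⇑σ) β i := by
      unfold tally
      congr 1
      apply Finset.filter_congr
      intro b _
      have hfilt : (Finset.univ.filter fun j : ι => con j = con i ∧
          (if G.Reachable c₀ (con j) then σ j else j) ∈ β b)
          = Finset.univ.filter fun j : ι => con j = con i ∧ σ j ∈ β b := by
        apply Finset.filter_congr
        intro j _
        by_cases hj : con j = con i
        · rw [hj]; simp [h, hj]
        · simp [hj]
      rw [hfilt]
      simp [h]
    rw [key, hundet]
  · have key : tally con v (fun j : ι => if G.Reachable c₀ (con j) then σ j else j) β i
        = tally con v id β i := by
      unfold tally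
      congr 1
      apply Finset.filter_congr
      intro b _
      have hfilt : (Finset.univ.filter fun j : ι => con j = con i ∧
          (if G.Reachable c₀ (con j) then σ j else j) ∈ β b)
          = Finset.univ.filter fun j : ι => con j = con i ∧ j ∈ β b := by
        apply Finset.filter_congr
        intro j _
        by_cases hj : con j = con i
        · rw [hj]; simp [h, hj]
        · simp [hj]
      rw [hfilt]
      simp [h]
    exact key
end

section
/- Let (β_1,…,β_B) be a deck of feasible ballots that detects every non-identity bijection on N. Let C̄ ⊆ C be a set of contests and N̄ = ∪_{c ∈ C̄} N_c the candidates in them. Consider the reduced ballot style with candidates N \ N̄ and contests C \ C̄ (with unchanged N_c and v_c). Then the reduced deck (β_1 \ N̄, …, β_B \ N̄) is feasible for the reduced style and detects every non-identity bijection on N \ N̄. -/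
open Finset

variable {ι γ : Type*} [Fintype ι] [DecidableEq ι] [DecidableEq γ]

/-!
Extend `σ'` to `N` by the identity on the removed candidates. The full deck detects this
extension at some candidate `i`. The extension fixes every removed contest pointwise, so `i` lies
in a surviving contest; and since the overvote test for a candidate only looks at its own
contest, the reduced deck gives the surviving candidates the same tallies as the full deck.
-/

omit [Fintype ι] [DecidableEq ι] in
theorem feasibleBallot.subtype {con : ι → γ} {v : γ → ℕ} {β : Finset ι}
    (p : ι → Prop) [DecidablePred p] (h : feasibleBallot con v β) :
    feasibleBallot (fun i : Subtype p => con i.val) v (β.subtype p) := fun c =>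
  calc ((β.subtype p).filter fun j => con j.val = c).card
      ≤ (β.filter fun j => con j = c).card :=
        card_le_card_of_injOn Subtype.val (fun j hj => by simp_all) Subtype.val_injective.injOn
    _ ≤ v c := h c

theorem tally_eq_tally_id_of_forall_fixed {con : ι → γ} (v : γ → ℕ) {σ : ι → ι} {B : ℕ}
    (β : Fin B → Finset ι) {i : ι} (hfix : ∀ j, con j = con i → σ j = j) :
    tally con v σ β i = tally con v id β i := by
  have hcontest : ∀ b, (univ.filter fun j => con j = con i ∧ σ j ∈ β b) =
      univ.filter fun j => con j = con i ∧ id j ∈ β b :=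
    fun b => filter_congr fun j _ => and_congr_right fun hj => by rw [hfix j hj, id]
  simp only [tally, hfix i rfl, hcontest, id]

theorem tally_subtype {con : ι → γ} (v : γ → ℕ) (q : γ → Prop) [DecidablePred q]
    {σ : ι → ι} {σ' : {i // q (con i)} → {i // q (con i)}} (hσ : ∀ j, (σ' j).val = σ j.val)
    {B : ℕ} (β : Fin B → Finset ι) (i : {i // q (con i)}) :
    tally (fun j : {i // q (con i)} => con j.val) v σ' (fun b => (β b).subtype fun j => q (con j))
      i = tally con v σ β i.val := by
  have hcontest : ∀ b, (univ.filter fun j : {i // q (con i)} =>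
      con j.val = con i.val ∧ σ j.val ∈ β b).card =
      (univ.filter fun j => con j = con i.val ∧ σ j ∈ β b).card := by
    intro b
    refine card_bij (fun j _ => j.val) (fun j hj => by simpa using hj)
      (fun _ _ _ _ => Subtype.ext) ?_
    intro j hj
    simp only [mem_filter, mem_univ, true_and] at hj
    exact ⟨⟨j, hj.1 ▸ i.2⟩, by simpa using hj, rfl⟩
  simp only [tally, mem_subtype, hσ, hcontest]

theorem reduced_deck_detects_all
    (con : ι → γ) (v : γ → ℕ) {B : ℕ} (β : Fin B → Finset ι)
    (hfeas : ∀ b, feasibleBallot con v (β b))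
    (hdet : ∀ σ : Equiv.Perm ι, σ ≠ 1 → tally con v (⇑σ) β ≠ tally con v id β)
    (S : Finset γ) :
    (∀ b, feasibleBallot (fun i : {i : ι // con i ∉ S} => con i.val) v
        ((β b).subtype fun i => con i ∉ S)) ∧
    (∀ σ' : Equiv.Perm {i : ι // con i ∉ S}, σ' ≠ 1 →
      tally (fun i : {i : ι // con i ∉ S} => con i.val) v (⇑σ')
          (fun b => (β b).subtype fun i => con i ∉ S) ≠
        tally (fun i : {i : ι // con i ∉ S} => con i.val) v id
          (fun b => (β b).subtype fun i => con i ∉ S)) := by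
  refine ⟨fun b => (hfeas b).subtype _, fun σ' hσ' => ?_⟩
  set σ := Equiv.Perm.ofSubtype σ'
  have hσ : σ ≠ 1 := (map_ne_one_iff _ Equiv.Perm.ofSubtype_injective).2 hσ'
  obtain ⟨i, hi⟩ := Function.ne_iff.1 (hdet σ hσ)
  have hiS : con i ∉ S := fun hiS => hi <| tally_eq_tally_id_of_forall_fixed v β fun j hj =>
    Equiv.Perm.ofSubtype_apply_of_not_mem σ' (not_not.2 (hj ▸ hiS))
  refine Function.ne_iff.2 ⟨⟨i, hiS⟩, ?_⟩
  rwa [tally_subtype v (· ∉ S) fun j => (Equiv.Perm.ofSubtype_apply_coe σ' j).symm,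
    tally_subtype v (· ∉ S) (σ := id) (σ' := id) fun _ => rfl]
end

section
/- Consider a ballot style consisting of a single contest with candidates {1,…,m} and cap v = m (a single noncompetitive contest). A deck of B feasible ballots giving every candidate at least one vote detects every non-identity bijection if and only if all m candidates receive pairwise distinct vote totals, and this forces B ≥ m. -/
open Finset

variable {ι γ : Type*} [Fintype ι] [DecidableEq ι] [DecidableEq γ]

theorem single_noncompetitive_contest_detect_iff
    {ι : Type*} [Fintype ι] [DecidableEq ι]
    (v : Unit → ℕ) (hv : v () = Fintype.card ι)
    {B : ℕ} (β : Fin B → Finset ι)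
    (hfeas : ∀ b, feasibleBallot (fun _ : ι => ()) v (β b))
    (hpos : ∀ i : ι, 1 ≤ voteCount β i) :
    ((∀ σ : Equiv.Perm ι, σ ≠ 1 →
        tally (fun _ : ι => ()) v (⇑σ) β ≠ tally (fun _ : ι => ()) v id β) ↔
      Function.Injective (voteCount β)) ∧
    (Function.Injective (voteCount β) → Fintype.card ι ≤ B) := by
  classical
  have htally : ∀ (σ : ι → ι) (i : ι),
      tally (fun _ : ι => ()) v σ β i = voteCount β (σ i) := by
    intro σ i
    unfold tally voteCount
    congr 1
    apply Finset.filter_congr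
    intro b _
    simp only [and_iff_left_iff_imp]
    intro _
    calc (Finset.univ.filter fun j : ι => True ∧ σ j ∈ β b).card
        ≤ (Finset.univ : Finset ι).card := Finset.card_filter_le _ _
      _ = Fintype.card ι := rfl
      _ = v () := hv.symm
  constructor
  · constructor
    · intro hdet i j hij
      by_contra hne
      set σ : Equiv.Perm ι := Equiv.swap i j with hσ
      have hs : σ ≠ 1 := by
        simp [hσ, Equiv.swap_eq_one_iff, hne]
      apply hdet σ hs
      funext k
      rw [htally, htally]
      simp only [id]
      rcases eq_or_ne k i with rfl | hki
      · rw [hσ, Equiv.swap_apply_left]; exact hij.symm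
      rcases eq_or_ne k j with rfl | hkj
      · rw [hσ, Equiv.swap_apply_right]; exact hij
      · rw [hσ, Equiv.swap_apply_of_ne_of_ne hki hkj]
    · intro hinj σ hσ
      obtain ⟨i, hi⟩ : ∃ i, σ i ≠ i := by
        by_contra h
        push_neg at h
        exact hσ (Equiv.ext h)
      intro heq
      have := congrFun heq i
      rw [htally, htally] at this
      exact hi (hinj this)
  · intro hinj
    have hle : ∀ i, voteCount β i ≤ B := by
      intro i
      calc voteCount β i ≤ (Finset.univ : Finset (Fin B)).card :=
          Finset.card_filter_le _ _
        _ = B := by simp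
    have hinjf : Function.Injective (fun i : ι =>
        (⟨voteCount β i - 1, by
          have := hpos i; have := hle i; omega⟩ : Fin B)) := by
      intro i j h
      apply hinj
      have h1 := hpos i; have h2 := hpos j
      simp only [Fin.mk.injEq] at h
      omega
    calc Fintype.card ι ≤ Fintype.card (Fin B) :=
        Fintype.card_le_of_injective _ hinjf
      _ = B := Fintype.card_fin B
end

section
/- Let σ be a non-identity bijection and suppose contest c satisfies Σ_{c' ∈ C} min(|{i ∈ N_c : σ(i) ∈ N_{c'}}|, v_{c'}) ≤ v_c. Then for every feasible ballot β (i.e., |β ∩ N_{c'}| ≤ v_{c'} for all c'), contest c is not interpreted as overvoted under σ: |{i ∈ N_c : σ(i) ∈ β}| ≤ v_c. -/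
open Finset

variable {ι γ : Type*} [Fintype ι] [DecidableEq ι] [DecidableEq γ]

theorem card_filter_comp_mem_le {α κ : Type*} [DecidableEq κ] {s : Finset α} {f : α → κ}
    (hf : Set.InjOn f s) (t : Finset κ) : #(s.filter fun i => f i ∈ t) ≤ #t :=
  card_le_card_of_injOn f (fun _ hi => (mem_filter.1 hi).2)
    (hf.mono fun _ hi => (mem_filter.1 hi).1)

theorem card_filter_comp_mem_le_sum_min {α κ : Type*} [DecidableEq κ] [Fintype γ]
    {s : Finset α} {f : α → κ} (hf : Set.InjOn f s) (con : κ → γ) (v : γ → ℕ)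
    {β : Finset κ} (hβ : feasibleBallot con v β) :
    #(s.filter fun i => f i ∈ β) ≤ ∑ c', min #(s.filter fun i => con (f i) = c') (v c') := by
  rw [card_eq_sum_card_fiberwise (f := fun i => con (f i)) fun _ _ => mem_univ _]
  refine sum_le_sum fun c' _ => le_min ?_ ?_
  · exact card_le_card fun i hi => by
      simp only [mem_filter] at hi ⊢
      exact ⟨hi.1.1, hi.2⟩
  · calc #((s.filter fun i => f i ∈ β).filter fun i => con (f i) = c')
        = #(s.filter fun i => f i ∈ β.filter fun j => con j = c') := by
          simp only [filter_filter, mem_filter]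
      _ ≤ #(β.filter fun j => con j = c') := card_filter_comp_mem_le hf _
      _ ≤ v c' := hβ c'

theorem no_overvote_of_small_inflow_general
    [Fintype γ] (con : ι → γ) (v : γ → ℕ)
    (σ : Equiv.Perm ι) (c : γ)
    (hsum : (∑ c' : γ, min
        (Finset.univ.filter fun i : ι => con i = c ∧ con (σ i) = c').card
        (v c')) ≤ v c)
    (β : Finset ι) (hβ : feasibleBallot con v β) :
    (Finset.univ.filter fun i : ι => con i = c ∧ σ i ∈ β).card ≤ v c := by
  have h := card_filter_comp_mem_le_sum_min (s := univ.filter fun i => con i = c)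
    σ.injective.injOn con v hβ
  simp only [filter_filter] at h
  exact h.trans hsum

theorem no_overvote_of_small_inflow
    [Fintype γ] (con : ι → γ) (v : γ → ℕ)
    (σ : Equiv.Perm ι) (hσ : σ ≠ 1) (c : γ)
    (hsum : (∑ c' : γ, min
        (Finset.univ.filter fun i : ι => con i = c ∧ con (σ i) = c').card
        (v c')) ≤ v c)
    (β : Finset ι) (hβ : feasibleBallot con v β) :
    (Finset.univ.filter fun i : ι => con i = c ∧ σ i ∈ β).card ≤ v c :=
  no_overvote_of_small_inflow_general con v σ c hsum β hβ
end
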